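/- Fourth moment of the norm under bounded kurtosis of linear functionals: Let 𝓗 be a separable Hilbert space and X an 𝓗-valued random element with E[‖X‖²] ≤ κ² and E[⟨X,f⟩⁴] ≤ ρ·(E[⟨X,f⟩²])² for every f∈𝓗, where ρ,κ>0 are constants. Then E[‖X‖⁴] ≤ ρ·κ⁴. -/

import Mathlib

open MeasureTheory
open scoped RealInnerProductSpace

set_option maxHeartbeats 1000000

/-- Auxiliary version of the theorem assuming completeness of the Hilbert space. -/
theorem fourth_moment_bounded_kurtosis_complete
    {Ω : Type*} [MeasurableSpace Ω] (P : Measure Ω) [IsProbabilityMeasure P]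
    {𝓗 : Type*} [NormedAddCommGroup 𝓗] [InnerProductSpace ℝ 𝓗] [CompleteSpace 𝓗]
    [TopologicalSpace.SeparableSpace 𝓗] [MeasurableSpace 𝓗] [BorelSpace 𝓗]
    (X : Ω → 𝓗) (hXmeas : Measurable X)
    (hint : Integrable (fun ω => ‖X ω‖ ^ 4) P)
    (ρ κ : ℝ) (hρ : 0 < ρ) (hκ : 0 < κ)
    (h2 : ∫ ω, ‖X ω‖ ^ 2 ∂P ≤ κ ^ 2)
    (h4 : ∀ f : 𝓗, ∫ ω, ⟪X ω, f⟫ ^ 4 ∂P ≤ ρ * (∫ ω, ⟪X ω, f⟫ ^ 2 ∂P) ^ 2) :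
    ∫ ω, ‖X ω‖ ^ 4 ∂P ≤ ρ * κ ^ 4 := by
  classical
  obtain ⟨w, b, hb⟩ := exists_hilbertBasis ℝ 𝓗
  have hortho : Orthonormal ℝ ((↑) : w → 𝓗) := hb ▸ b.orthonormal
  -- the index set is countable
  haveI hcw : Countable w := by
    refine Pairwise.countable_of_isOpen_disjoint
      (s := fun i : w => Metric.ball (i : 𝓗) (1/2)) ?_ (fun i => Metric.isOpen_ball)
      (fun i => Metric.nonempty_ball.2 (by norm_num))
    intro i j hij
    have hin : ⟪(i : 𝓗), (j : 𝓗)⟫ = 0 := hortho.2 hij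
    have hni : ‖(i : 𝓗)‖ = 1 := hortho.1 i
    have hnj : ‖(j : 𝓗)‖ = 1 := hortho.1 j
    have hsq : ‖(i : 𝓗) - (j : 𝓗)‖ ^ 2 = 2 := by
      rw [@norm_sub_sq_real, hin, hni, hnj]; ring
    have hdist : (1 : ℝ) ≤ dist (i : 𝓗) (j : 𝓗) := by
      rw [dist_eq_norm]
      nlinarith [norm_nonneg ((i : 𝓗) - (j : 𝓗))]
    exact Metric.ball_disjoint_ball (by linarith)
  -- notation
  set g : w → Ω → ℝ := fun i ω => ⟪X ω, (i : 𝓗)⟫ ^ 2 with hg_def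
  set a : w → ℝ := fun i => ∫ ω, g i ω ∂P with ha_def
  have hinner_meas : ∀ f : 𝓗, Measurable fun ω => ⟪X ω, f⟫ := fun f =>
    ((continuous_id.inner (continuous_const : Continuous fun _ : 𝓗 => f)).measurable).comp hXmeas
  have hgm : ∀ i, Measurable (g i) := fun i => (hinner_meas _).pow_const 2
  have hgnn : ∀ i ω, 0 ≤ g i ω := fun i ω => sq_nonneg _
  have hgle : ∀ i ω, g i ω ≤ ‖X ω‖ ^ 2 := by
    intro i ω
    have h1 : |⟪X ω, (i : 𝓗)⟫| ≤ ‖X ω‖ := by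
      simpa [hortho.1 i] using abs_real_inner_le_norm (X ω) (i : 𝓗)
    have h0 : |⟪X ω, (i : 𝓗)⟫| ^ 2 ≤ ‖X ω‖ ^ 2 :=
      pow_le_pow_left₀ (abs_nonneg _) h1 2
    simpa [sq_abs] using h0
  have hggle : ∀ i j ω, g i ω * g j ω ≤ ‖X ω‖ ^ 4 := by
    intro i j ω
    have h1 := hgle i ω; have h2' := hgle j ω
    have hn1 := hgnn i ω; have hn2 := hgnn j ω
    nlinarith [sq_nonneg (‖X ω‖)]
  -- integrability facts
  have hXn2 : Integrable (fun ω => ‖X ω‖ ^ 2) P := by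
    refine Integrable.mono' ((integrable_const (1:ℝ)).add hint)
      ((hXmeas.norm.pow_const 2).aestronglyMeasurable) ?_
    filter_upwards with ω
    simp only [Pi.add_apply]
    rw [Real.norm_of_nonneg (by positivity)]
    nlinarith [sq_nonneg (‖X ω‖ ^ 2 - 1)]
  have hgint : ∀ i, Integrable (g i) P := by
    intro i
    refine hXn2.mono' (hgm i).aestronglyMeasurable ?_
    filter_upwards with ω
    rw [Real.norm_of_nonneg (hgnn i ω)]
    exact hgle i ω
  have hg2int : ∀ i, Integrable (fun ω => g i ω ^ 2) P := by
    intro i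
    refine hint.mono' (((hgm i).pow_const 2).aestronglyMeasurable) ?_
    filter_upwards with ω
    rw [Real.norm_of_nonneg (by positivity)]
    have := hggle i i ω
    nlinarith [hgnn i ω]
  have hggint : ∀ i j, Integrable (fun ω => g i ω * g j ω) P := by
    intro i j
    refine hint.mono' (((hgm i).mul (hgm j)).aestronglyMeasurable) ?_
    filter_upwards with ω
    rw [Real.norm_of_nonneg (mul_nonneg (hgnn i ω) (hgnn j ω))]
    exact hggle i j ω
  have ha0 : ∀ i, 0 ≤ a i := fun i => integral_nonneg (fun ω => hgnn i ω)
  -- pointwise expansion of the norm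
  have hsum_pt : ∀ ω, HasSum (fun i => g i ω) (‖X ω‖ ^ 2) := by
    intro ω
    have h := b.hasSum_inner_mul_inner (X ω) (X ω)
    have heq : (fun i => ⟪X ω, b i⟫ * ⟪b i, X ω⟫) = fun i => g i ω := by
      funext i
      rw [hb]
      simp only [hg_def]
      rw [real_inner_comm ((i : w) : 𝓗) (X ω)]; ring
    rw [heq] at h
    simpa [real_inner_self_eq_norm_sq] using h
  -- partial sums of a are bounded by κ^2
  have hpartial : ∀ s : Finset w, ∑ i ∈ s, a i ≤ κ ^ 2 := by
    intro s
    have h1 : ∑ i ∈ s, a i = ∫ ω, ∑ i ∈ s, g i ω ∂P :=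
      (integral_finset_sum s fun i _ => hgint i).symm
    rw [h1]
    refine le_trans (integral_mono (integrable_finset_sum s fun i _ => hgint i) hXn2 ?_) h2
    intro ω
    exact sum_le_hasSum s (fun i _ => hgnn i ω) (hsum_pt ω)
  have hsa : Summable a := summable_of_sum_le (fun i => ha0 i) hpartial
  have htsa : ∑' i, a i ≤ κ ^ 2 := hsa.tsum_le_of_sum_le hpartial
  have htsa0 : 0 ≤ ∑' i, a i := tsum_nonneg ha0
  -- Cauchy-Schwarz and the kurtosis bound
  have hkey : ∀ i j, ∫ ω, g i ω * g j ω ∂P ≤ ρ * (a i * a j) := by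
    intro i j
    have hpq : Real.HolderConjugate 2 2 := Real.holderConjugate_iff.mpr ⟨one_lt_two, by norm_num⟩
    have hmem : ∀ k : w, MemLp (g k) (ENNReal.ofReal 2) P := by
      intro k
      rw [show ENNReal.ofReal 2 = 2 by norm_num]
      exact (memLp_two_iff_integrable_sq (hgm k).aestronglyMeasurable).2 (hg2int k)
    have hCS := integral_mul_le_Lp_mul_Lq_of_nonneg hpq
      (ae_of_all _ (hgnn i)) (ae_of_all _ (hgnn j)) (hmem i) (hmem j)
    have hrw : ∀ k : w, (∫ ω, g k ω ^ (2:ℝ) ∂P) = ∫ ω, ⟪X ω, (k : 𝓗)⟫ ^ 4 ∂P := by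
      intro k
      congr 1; funext ω
      rw [show (2:ℝ) = ((2:ℕ):ℝ) by norm_num, Real.rpow_natCast]
      simp only [hg_def]; ring
    have hbd : ∀ k : w, (∫ ω, g k ω ^ (2:ℝ) ∂P) ^ (1/2 : ℝ) ≤ Real.sqrt ρ * a k := by
      intro k
      have h1 : (∫ ω, g k ω ^ (2:ℝ) ∂P) ≤ ρ * (a k) ^ 2 := by
        rw [hrw k]
        exact h4 (k : 𝓗)
      have h0 : (0:ℝ) ≤ ∫ ω, g k ω ^ (2:ℝ) ∂P :=
        integral_nonneg fun ω => Real.rpow_nonneg (hgnn k ω) _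
      calc (∫ ω, g k ω ^ (2:ℝ) ∂P) ^ (1/2 : ℝ)
          ≤ (ρ * (a k) ^ 2) ^ (1/2 : ℝ) := Real.rpow_le_rpow h0 h1 (by norm_num)
        _ = Real.sqrt ρ * a k := by
            rw [← Real.sqrt_eq_rpow, Real.sqrt_mul hρ.le, Real.sqrt_sq (ha0 k)]
    calc ∫ ω, g i ω * g j ω ∂P
        ≤ (∫ ω, g i ω ^ (2:ℝ) ∂P) ^ (1/2 : ℝ) * (∫ ω, g j ω ^ (2:ℝ) ∂P) ^ (1/2 : ℝ) := hCS
      _ ≤ (Real.sqrt ρ * a i) * (Real.sqrt ρ * a j) := by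
          refine mul_le_mul (hbd i) (hbd j) (Real.rpow_nonneg ?_ _) ?_
          · exact integral_nonneg fun ω => Real.rpow_nonneg (hgnn j ω) _
          · positivity
      _ = ρ * (a i * a j) := by
          rw [show (Real.sqrt ρ * a i) * (Real.sqrt ρ * a j)
              = (Real.sqrt ρ * Real.sqrt ρ) * (a i * a j) by ring,
            Real.mul_self_sqrt hρ.le]
  -- summability of the double-indexed families
  have hanorm : Summable fun i => ‖a i‖ := by
    have : (fun i => ‖a i‖) = a := funext fun i => Real.norm_of_nonneg (ha0 i)
    rw [this]; exact hsa
  have hsum_aa : Summable fun p : w × w => a p.1 * a p.2 :=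
    summable_mul_of_summable_norm hanorm hanorm
  have hsum_ρaa : Summable fun p : w × w => ρ * (a p.1 * a p.2) := hsum_aa.mul_left ρ
  set c : w × w → ℝ := fun p => ∫ ω, g p.1 ω * g p.2 ω ∂P with hc_def
  have hc0 : ∀ p, 0 ≤ c p := fun p =>
    integral_nonneg fun ω => mul_nonneg (hgnn p.1 ω) (hgnn p.2 ω)
  have hcle : ∀ p : w × w, c p ≤ ρ * (a p.1 * a p.2) := fun p => hkey p.1 p.2
  have hsum_c : Summable c := hsum_ρaa.of_nonneg_of_le hc0 hcle
  -- interchange of sum and integral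
  have hpt4 : ∀ ω, ‖X ω‖ ^ 4 = ∑' p : w × w, g p.1 ω * g p.2 ω := by
    intro ω
    have hgnorm : Summable fun i => ‖g i ω‖ := by
      have : (fun i => ‖g i ω‖) = fun i => g i ω :=
        funext fun i => Real.norm_of_nonneg (hgnn i ω)
      rw [this]; exact (hsum_pt ω).summable
    have hmt := tsum_mul_tsum_of_summable_norm hgnorm hgnorm
    rw [(hsum_pt ω).tsum_eq] at hmt
    rw [show ‖X ω‖ ^ 4 = ‖X ω‖ ^ 2 * ‖X ω‖ ^ 2 by ring, hmt]
  have hmain : ∫ ω, ‖X ω‖ ^ 4 ∂P = ∑' p : w × w, c p := by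
    have hmeasF : ∀ p : w × w, AEStronglyMeasurable (fun ω => g p.1 ω * g p.2 ω) P :=
      fun p => ((hgm p.1).mul (hgm p.2)).aestronglyMeasurable
    have hlint : ∀ p : w × w, (∫⁻ ω, ‖g p.1 ω * g p.2 ω‖₊ ∂P) = ENNReal.ofReal (c p) := by
      intro p
      rw [show (∫⁻ ω, (‖g p.1 ω * g p.2 ω‖₊ : ENNReal) ∂P) = ∫⁻ ω, ‖g p.1 ω * g p.2 ω‖ₑ ∂P from rfl]
      rw [← ofReal_integral_norm_eq_lintegral_enorm (hggint p.1 p.2)]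
      congr 1
      refine integral_congr_ae (ae_of_all _ fun ω => ?_)
      exact Real.norm_of_nonneg (mul_nonneg (hgnn p.1 ω) (hgnn p.2 ω))
    have hfin : (∑' p : w × w, ∫⁻ ω, ‖g p.1 ω * g p.2 ω‖₊ ∂P) ≠ ⊤ := by
      have hle : (∑' p : w × w, ∫⁻ ω, ‖g p.1 ω * g p.2 ω‖₊ ∂P)
          ≤ ∑' p : w × w, ENNReal.ofReal (ρ * (a p.1 * a p.2)) := by
        refine ENNReal.tsum_le_tsum fun p => ?_
        rw [hlint p]
        exact ENNReal.ofReal_le_ofReal (hcle p)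
      have heq : (∑' p : w × w, ENNReal.ofReal (ρ * (a p.1 * a p.2)))
          = ENNReal.ofReal (∑' p : w × w, ρ * (a p.1 * a p.2)) :=
        (ENNReal.ofReal_tsum_of_nonneg (f := fun p : w × w => ρ * (a p.1 * a p.2))
          (fun p => mul_nonneg hρ.le (mul_nonneg (ha0 p.1) (ha0 p.2))) hsum_ρaa).symm
      exact ne_top_of_le_ne_top (by rw [heq]; exact ENNReal.ofReal_ne_top) hle
    have hit := integral_tsum hmeasF hfin
    calc ∫ ω, ‖X ω‖ ^ 4 ∂P = ∫ ω, ∑' p : w × w, g p.1 ω * g p.2 ω ∂P := by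
          refine integral_congr_ae (ae_of_all _ fun ω => ?_)
          exact hpt4 ω
      _ = ∑' p : w × w, c p := hit
  -- conclusion
  rw [hmain]
  calc (∑' p : w × w, c p)
      ≤ ∑' p : w × w, ρ * (a p.1 * a p.2) := Summable.tsum_le_tsum hcle hsum_c hsum_ρaa
    _ = ρ * ∑' p : w × w, a p.1 * a p.2 := tsum_mul_left
    _ = ρ * ((∑' i, a i) * (∑' j, a j)) := by
        rw [← tsum_mul_tsum_of_summable_norm hanorm hanorm]
    _ ≤ ρ * (κ ^ 2 * κ ^ 2) := by
        refine mul_le_mul_of_nonneg_left ?_ hρ.le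
        exact mul_le_mul htsa htsa htsa0 (by positivity)
    _ = ρ * κ ^ 4 := by ring

theorem fourth_moment_bounded_kurtosis
    {Ω : Type*} [MeasurableSpace Ω] (P : Measure Ω) [IsProbabilityMeasure P]
    {𝓗 : Type*} [NormedAddCommGroup 𝓗] [InnerProductSpace ℝ 𝓗]
    [TopologicalSpace.SeparableSpace 𝓗] [MeasurableSpace 𝓗] [BorelSpace 𝓗]
    (X : Ω → 𝓗) (hXmeas : Measurable X)
    (hint : Integrable (fun ω => ‖X ω‖ ^ 4) P)
    (ρ κ : ℝ) (hρ : 0 < ρ) (hκ : 0 < κ)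
    (h2 : ∫ ω, ‖X ω‖ ^ 2 ∂P ≤ κ ^ 2)
    (h4 : ∀ f : 𝓗, ∫ ω, ⟪X ω, f⟫ ^ 4 ∂P ≤ ρ * (∫ ω, ⟪X ω, f⟫ ^ 2 ∂P) ^ 2) :
    ∫ ω, ‖X ω‖ ^ 4 ∂P ≤ ρ * κ ^ 4 := by
  classical
  letI : MeasurableSpace (UniformSpace.Completion 𝓗) := borel _
  haveI : BorelSpace (UniformSpace.Completion 𝓗) := ⟨rfl⟩
  set Y : Ω → UniformSpace.Completion 𝓗 := fun ω => (X ω : UniformSpace.Completion 𝓗)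
    with hY_def
  have hcont : Continuous ((↑) : 𝓗 → UniformSpace.Completion 𝓗) :=
    UniformSpace.Completion.continuous_coe 𝓗
  have hYmeas : Measurable Y := hcont.measurable.comp hXmeas
  have hnormY : ∀ ω, ‖Y ω‖ = ‖X ω‖ := fun ω => UniformSpace.Completion.norm_coe _
  have hintY : Integrable (fun ω => ‖Y ω‖ ^ 4) P := by
    simpa only [hnormY] using hint
  have h2Y : ∫ ω, ‖Y ω‖ ^ 2 ∂P ≤ κ ^ 2 := by
    simpa only [hnormY] using h2
  have hXn2 : Integrable (fun ω => ‖X ω‖ ^ 2) P := by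
    refine Integrable.mono' ((integrable_const (1:ℝ)).add hint)
      ((hXmeas.norm.pow_const 2).aestronglyMeasurable) ?_
    filter_upwards with ω
    simp only [Pi.add_apply]
    rw [Real.norm_of_nonneg (by positivity)]
    nlinarith [sq_nonneg (‖X ω‖ ^ 2 - 1)]
  have hmY : ∀ f' : UniformSpace.Completion 𝓗, Measurable fun ω => ⟪Y ω, f'⟫ := fun f' =>
    ((continuous_id.inner
      (continuous_const : Continuous fun _ : UniformSpace.Completion 𝓗 => f')).measurable).comp
      hYmeas
  have h4Y : ∀ f' : UniformSpace.Completion 𝓗,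
      ∫ ω, ⟪Y ω, f'⟫ ^ 4 ∂P ≤ ρ * (∫ ω, ⟪Y ω, f'⟫ ^ 2 ∂P) ^ 2 := by
    intro f'
    have hdense : DenseRange ((↑) : 𝓗 → UniformSpace.Completion 𝓗) :=
      UniformSpace.Completion.denseRange_coe
    have hex : ∀ n : ℕ, ∃ y : 𝓗, dist f' ((y : UniformSpace.Completion 𝓗)) < 1/(n+1) :=
      fun n => hdense.exists_dist_lt f' (by positivity)
    choose fn hfn using hex
    have hfn_tendsto : Filter.Tendsto (fun n => ((fn n : UniformSpace.Completion 𝓗)))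
        Filter.atTop (nhds f') := by
      rw [tendsto_iff_dist_tendsto_zero]
      refine squeeze_zero (fun n => dist_nonneg) (fun n => ?_)
        tendsto_one_div_add_atTop_nhds_zero_nat
      rw [dist_comm]; exact (hfn n).le
    have hBn : ∀ n, ‖((fn n : UniformSpace.Completion 𝓗))‖ ≤ ‖f'‖ + 1 := by
      intro n
      have h1 : ‖((fn n : UniformSpace.Completion 𝓗))‖ - ‖f'‖
          ≤ ‖((fn n : UniformSpace.Completion 𝓗)) - f'‖ := norm_sub_norm_le _ _
      have h2' : ‖((fn n : UniformSpace.Completion 𝓗)) - f'‖ = dist f'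
          ((fn n : UniformSpace.Completion 𝓗)) := by rw [dist_comm, dist_eq_norm]
      have h3 : dist f' ((fn n : UniformSpace.Completion 𝓗)) ≤ 1 := by
        refine le_trans (hfn n).le ?_
        rw [div_le_one (by positivity)]
        linarith [Nat.cast_nonneg (α := ℝ) n]
      linarith [h1, h2' ▸ h1]
    have hinner_bound : ∀ (n : ℕ) (ω : Ω),
        |⟪Y ω, ((fn n : UniformSpace.Completion 𝓗))⟫| ≤ ‖X ω‖ * (‖f'‖ + 1) := by
      intro n ω
      calc |⟪Y ω, ((fn n : UniformSpace.Completion 𝓗))⟫|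
          ≤ ‖Y ω‖ * ‖((fn n : UniformSpace.Completion 𝓗))‖ := abs_real_inner_le_norm _ _
        _ ≤ ‖X ω‖ * (‖f'‖ + 1) := by
            rw [hnormY ω]
            exact mul_le_mul_of_nonneg_left (hBn n) (norm_nonneg _)
    -- convergence of fourth moments
    have T4 : Filter.Tendsto
        (fun n => ∫ ω, ⟪Y ω, ((fn n : UniformSpace.Completion 𝓗))⟫ ^ 4 ∂P)
        Filter.atTop (nhds (∫ ω, ⟪Y ω, f'⟫ ^ 4 ∂P)) := by
      refine tendsto_integral_of_dominated_convergence
        (fun ω => (‖f'‖ + 1) ^ 4 * ‖X ω‖ ^ 4)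
        (fun n => ((hmY _).pow_const 4).aestronglyMeasurable)
        (hint.const_mul _) (fun n => ?_) ?_
      · filter_upwards with ω
        rw [Real.norm_eq_abs, abs_pow]
        calc |⟪Y ω, ((fn n : UniformSpace.Completion 𝓗))⟫| ^ 4
            ≤ (‖X ω‖ * (‖f'‖ + 1)) ^ 4 :=
              pow_le_pow_left₀ (abs_nonneg _) (hinner_bound n ω) 4
          _ = (‖f'‖ + 1) ^ 4 * ‖X ω‖ ^ 4 := by ring
      · filter_upwards with ω
        exact (Filter.Tendsto.inner tendsto_const_nhds hfn_tendsto).pow 4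
    -- convergence of second moments
    have T2 : Filter.Tendsto
        (fun n => ∫ ω, ⟪Y ω, ((fn n : UniformSpace.Completion 𝓗))⟫ ^ 2 ∂P)
        Filter.atTop (nhds (∫ ω, ⟪Y ω, f'⟫ ^ 2 ∂P)) := by
      refine tendsto_integral_of_dominated_convergence
        (fun ω => (‖f'‖ + 1) ^ 2 * ‖X ω‖ ^ 2)
        (fun n => ((hmY _).pow_const 2).aestronglyMeasurable)
        (hXn2.const_mul _) (fun n => ?_) ?_
      · filter_upwards with ω
        rw [Real.norm_eq_abs, abs_pow]
        calc |⟪Y ω, ((fn n : UniformSpace.Completion 𝓗))⟫| ^ 2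
            ≤ (‖X ω‖ * (‖f'‖ + 1)) ^ 2 :=
              pow_le_pow_left₀ (abs_nonneg _) (hinner_bound n ω) 2
          _ = (‖f'‖ + 1) ^ 2 * ‖X ω‖ ^ 2 := by ring
      · filter_upwards with ω
        exact (Filter.Tendsto.inner tendsto_const_nhds hfn_tendsto).pow 2
    refine le_of_tendsto_of_tendsto' T4 ((T2.pow 2).const_mul ρ) (fun n => ?_)
    have hcoe : ∀ ω, ⟪Y ω, ((fn n : UniformSpace.Completion 𝓗))⟫ = ⟪X ω, fn n⟫ := by
      intro ω
      simp only [hY_def]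
      exact UniformSpace.Completion.inner_coe (𝕜 := ℝ) (X ω) (fn n)
    simp only [hcoe]
    exact h4 (fn n)
  have := fourth_moment_bounded_kurtosis_complete P Y hYmeas hintY ρ κ hρ hκ h2Y h4Y
  simpa only [hnormY] using this
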